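/- Let ω(x,y) = (1+|x|)^{-n}(1+|y|)^{-m} and σ(x,y) = |x|^{-n/q}|y|^{-m/q} on ℝ^n × ℝ^m, with α/n = β/m = 1/p - 1/q, 1 < p < q < ∞. Then the two-weight Muckenhoupt characteristic A^{αβ}_{pq}(ω,σ) = sup_{Q×P} |Q|^{α/n - 1}|P|^{β/m - 1}(∬_{Q×P} ω^q)^{1/q}(∬_{Q×P} σ^{-p/(p-1)})^{(p-1)/p} is finite. -/
import Mathlib


open MeasureTheory Metric ENNReal

noncomputable section

/-- Euclidean space `ℝ^n`. -/
abbrev Rn (n : ℕ) : Type := EuclideanSpace ℝ (Fin n)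

/-- Centered Hardy–Littlewood maximal function (balls centered at the point). -/
noncomputable def maxFn {n : ℕ} (f : Rn n → ℝ≥0∞) (x : Rn n) : ℝ≥0∞ :=
  ⨆ (r : ℝ) (_ : 0 < r),
    (∫⁻ u in closedBall x r, f u) / volume (closedBall x r)

/-- Two-parameter (strong) maximal function: centered products of balls. -/
noncomputable def strongMax {n m : ℕ} (f : Rn n × Rn m → ℝ≥0∞) (z : Rn n × Rn m) : ℝ≥0∞ :=
  ⨆ (r : ℝ) (s : ℝ) (_ : 0 < r) (_ : 0 < s),
    (∫⁻ w in closedBall z.1 r ×ˢ closedBall z.2 s, f w) /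
      (volume (closedBall z.1 r) * volume (closedBall z.2 s))

/-- Maximal operator in the first variable. -/
noncomputable def max1 {n m : ℕ} (f : Rn n × Rn m → ℝ≥0∞) (z : Rn n × Rn m) : ℝ≥0∞ :=
  maxFn (fun u => f (u, z.2)) z.1

/-- Maximal operator in the second variable. -/
noncomputable def max2 {n m : ℕ} (f : Rn n × Rn m → ℝ≥0∞) (z : Rn n × Rn m) : ℝ≥0∞ :=
  maxFn (fun v => f (z.1, v)) z.2

/-- Fractional kernel `|x - u|^(α - n)` on `ℝ^n`, valued in `ℝ≥0∞`. -/
noncomputable def ker {n : ℕ} (α : ℝ) (x u : Rn n) : ℝ≥0∞ :=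
  ENNReal.ofReal (dist x u) ^ (α - (n : ℝ))

/-- Two-parameter strong fractional integral. -/
noncomputable def Ifrac {n m : ℕ} (α β : ℝ) (f : Rn n × Rn m → ℝ≥0∞)
    (z : Rn n × Rn m) : ℝ≥0∞ :=
  ∫⁻ w, f w * ker α z.1 w.1 * ker β z.2 w.2

/-- Average of `g` over the rectangle `closedBall c r ×ˢ closedBall d s`. -/
noncomputable def avgRect {n m : ℕ} (g : Rn n × Rn m → ℝ≥0∞) (c : Rn n) (d : Rn m)
    (r s : ℝ) : ℝ≥0∞ :=
  (∫⁻ w in closedBall c r ×ˢ closedBall d s, g w) /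
    (volume (closedBall c r) * volume (closedBall d s))

/-- Maximal two-weight Muckenhoupt characteristic `A^M_{pq}(ω,σ)`. -/
noncomputable def AMchar {n m : ℕ} (p q : ℝ) (ω σ : Rn n × Rn m → ℝ≥0∞) : ℝ≥0∞ :=
  ⨆ (c : Rn n) (d : Rn m) (r : ℝ) (s : ℝ) (_ : 0 < r) (_ : 0 < s),
    (avgRect (fun w => ω w ^ q) c d r s) ^ (1/q) *
      (avgRect (strongMax (fun w => (σ w)⁻¹ ^ (p/(p-1)))) c d r s) ^ ((p-1)/p)

/-- Ordinary two-weight characteristic `A_{pq}(ω,σ)` (averages form). -/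
noncomputable def Achar0 {n m : ℕ} (p q : ℝ) (ω σ : Rn n × Rn m → ℝ≥0∞) : ℝ≥0∞ :=
  ⨆ (c : Rn n) (d : Rn m) (r : ℝ) (s : ℝ) (_ : 0 < r) (_ : 0 < s),
    (avgRect (fun w => ω w ^ q) c d r s) ^ (1/q) *
      (avgRect (fun w => (σ w)⁻¹ ^ (p/(p-1))) c d r s) ^ ((p-1)/p)

/-- Fractional two-weight Muckenhoupt characteristic `A^{αβ}_{pq}(ω,σ)`. -/
noncomputable def Achar {n m : ℕ} (α β p q : ℝ) (ω σ : Rn n × Rn m → ℝ≥0∞) : ℝ≥0∞ :=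
  ⨆ (c : Rn n) (d : Rn m) (r : ℝ) (s : ℝ) (_ : 0 < r) (_ : 0 < s),
    volume (closedBall c r) ^ (α/(n:ℝ) - 1) * volume (closedBall d s) ^ (β/(m:ℝ) - 1) *
      (∫⁻ w in closedBall c r ×ˢ closedBall d s, ω w ^ q) ^ (1/q) *
      (∫⁻ w in closedBall c r ×ˢ closedBall d s, (σ w)⁻¹ ^ (p/(p-1))) ^ ((p-1)/p)

/-- One-parameter Muckenhoupt `A_p` condition with constant `K`. -/
def ApOn {n : ℕ} (p : ℝ) (K : ℝ≥0∞) (w : Rn n → ℝ≥0∞) : Prop :=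
  ∀ (c : Rn n) (r : ℝ), 0 < r →
    ((∫⁻ u in closedBall c r, w u) / volume (closedBall c r)) *
      ((∫⁻ u in closedBall c r, (w u) ^ (-(1/(p-1)))) / volume (closedBall c r)) ^ (p-1) ≤ K

/-- `w ∈ A_p × A_p`: the `A_p` condition holds uniformly (with constant `K`)
in each variable separately. -/
def ApTimesAp {n m : ℕ} (p : ℝ) (K : ℝ≥0∞) (w : Rn n × Rn m → ℝ≥0∞) : Prop :=
  (∀ᵐ y : Rn m, ApOn p K fun x => w (x, y)) ∧ (∀ᵐ x : Rn n, ApOn p K fun y => w (x, y))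

namespace Stmt15Aux

lemma sigma_int_le {n : ℕ} (a : ℝ) (ha : 0 ≤ a) (c : Rn n) (r : ℝ) :
    ∫⁻ x in closedBall c r, ENNReal.ofReal ‖x‖ ^ a
      ≤ ENNReal.ofReal (r + ‖c‖) ^ a * volume (closedBall c r) := by
  calc ∫⁻ x in closedBall c r, ENNReal.ofReal ‖x‖ ^ a
      ≤ ∫⁻ _x in closedBall c r, ENNReal.ofReal (r + ‖c‖) ^ a := by
        refine setLIntegral_mono' measurableSet_closedBall fun x hx => ?_
        refine ENNReal.rpow_le_rpow (ENNReal.ofReal_le_ofReal ?_) ha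
        have h1 : ‖x - c‖ ≤ r := mem_closedBall_iff_norm.mp hx
        have h2 : ‖x‖ = ‖x - c + c‖ := by rw [sub_add_cancel]
        calc ‖x‖ = ‖x - c + c‖ := h2
          _ ≤ ‖x - c‖ + ‖c‖ := norm_add_le _ _
          _ ≤ r + ‖c‖ := by linarith
    _ = ENNReal.ofReal (r + ‖c‖) ^ a * volume (closedBall c r) :=
        setLIntegral_const _ _

lemma omega_global {n : ℕ} {b : ℝ} (hb : (n : ℝ) < b) :
    ∫⁻ x : Rn n, ENNReal.ofReal (1 + ‖x‖) ^ (-b) ≠ ∞ := by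
  have hint : Integrable (fun x : Rn n => (1 + ‖x‖) ^ (-b)) := by
    apply integrable_one_add_norm
    rwa [finrank_euclideanSpace_fin]
  have hfin := hint.hasFiniteIntegral
  rw [hasFiniteIntegral_iff_ofReal] at hfin
  · have : ∀ x : Rn n, ENNReal.ofReal (1 + ‖x‖) ^ (-b)
        = ENNReal.ofReal ((1 + ‖x‖) ^ (-b)) := by
      intro x
      rw [← ENNReal.ofReal_rpow_of_pos (by positivity)]
    simp only [this]
    exact hfin.ne
  · filter_upwards with x
    positivity

/-- The constant in the local bound for the `ω` integral. -/
noncomputable def Kc (n : ℕ) (q : ℝ) : ℝ≥0∞ :=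
  ENNReal.ofReal ((3 : ℝ) ^ ((n : ℝ) * q))
    + (∫⁻ x : Rn n, ENNReal.ofReal (1 + ‖x‖) ^ (-((n : ℝ) * q)))
      / (ENNReal.ofReal ((3 : ℝ) ^ (-(n : ℝ))) * volume (closedBall (0 : Rn n) 1))

lemma Kc_ne_top {n : ℕ} (hn : 1 ≤ n) {q : ℝ} (hq : 1 < q) : Kc n q ≠ ∞ := by
  have hb : (n : ℝ) < (n : ℝ) * q := by
    have hn' : (1 : ℝ) ≤ (n : ℝ) := by exact_mod_cast hn
    nlinarith
  have h1 : (∫⁻ x : Rn n, ENNReal.ofReal (1 + ‖x‖) ^ (-((n : ℝ) * q))) ≠ ∞ :=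
    omega_global hb
  have h2 : (ENNReal.ofReal ((3 : ℝ) ^ (-(n : ℝ))) * volume (closedBall (0 : Rn n) 1)) ≠ 0 := by
    refine mul_ne_zero ?_ ?_
    · simp only [ne_eq, ENNReal.ofReal_eq_zero, not_le]
      positivity
    · exact (measure_closedBall_pos volume (0 : Rn n) one_pos).ne'
  exact ENNReal.add_ne_top.mpr ⟨ENNReal.ofReal_ne_top, (ENNReal.div_lt_top h1 h2).ne⟩

lemma omega_int_le {n : ℕ} (hn : 1 ≤ n) {q : ℝ} (hq : 1 < q) (c : Rn n) {r : ℝ} (hr : 0 < r) :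
    ∫⁻ x in closedBall c r, ENNReal.ofReal (1 + ‖x‖) ^ (-((n : ℝ) * q))
      ≤ Kc n q * (volume (closedBall c r) * ENNReal.ofReal (r + ‖c‖) ^ (-(n : ℝ))) := by
  set N : ℝ := (n : ℝ) with hN
  have hN1 : (1 : ℝ) ≤ N := by simp only [hN]; exact_mod_cast hn
  have hR : 0 < r + ‖c‖ := by positivity
  have hXeq : ENNReal.ofReal (r + ‖c‖) ^ (-N) = ENNReal.ofReal ((r + ‖c‖) ^ (-N)) :=
    ENNReal.ofReal_rpow_of_pos hR
  by_cases hc : ‖c‖ ≤ 2 * r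
  · -- near case: use the global integral
    have hsub : ∫⁻ x in closedBall c r, ENNReal.ofReal (1 + ‖x‖) ^ (-(N * q))
        ≤ ∫⁻ x : Rn n, ENNReal.ofReal (1 + ‖x‖) ^ (-(N * q)) :=
      setLIntegral_le_lintegral _ _
    -- lower bound for volume * R^{-N}
    have hvol : volume (closedBall c r)
        = ENNReal.ofReal (r ^ n) * volume (closedBall (0 : Rn n) 1) := by
      rw [Measure.addHaar_closedBall' volume c hr.le, finrank_euclideanSpace_fin]
    have hreal : (3 : ℝ) ^ (-N) ≤ r ^ n * (r + ‖c‖) ^ (-N) := by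
      have h3r : r + ‖c‖ ≤ 3 * r := by linarith
      have hrn : (r : ℝ) ^ n = r ^ N := by
        rw [hN, Real.rpow_natCast]
      have hmono : (r + ‖c‖) ^ (-N) ≥ (3 * r) ^ (-N) :=
        Real.rpow_le_rpow_of_nonpos hR h3r (by linarith)
      have hcalc : r ^ N * (3 * r) ^ (-N) = 3 ^ (-N) := by
        rw [Real.mul_rpow (by norm_num) hr.le, ← mul_assoc, mul_comm (r ^ N),
          mul_assoc, ← Real.rpow_add hr, add_neg_cancel, Real.rpow_zero, mul_one]
      calc (3 : ℝ) ^ (-N) = r ^ N * (3 * r) ^ (-N) := hcalc.symm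
        _ ≤ r ^ N * (r + ‖c‖) ^ (-N) := by
            have : (0:ℝ) ≤ r ^ N := (Real.rpow_pos_of_pos hr N).le
            nlinarith [hmono]
        _ = r ^ n * (r + ‖c‖) ^ (-N) := by rw [hrn]
    have hlow : ENNReal.ofReal ((3 : ℝ) ^ (-N)) * volume (closedBall (0 : Rn n) 1)
        ≤ volume (closedBall c r) * ENNReal.ofReal (r + ‖c‖) ^ (-N) := by
      rw [hvol, hXeq]
      calc ENNReal.ofReal ((3 : ℝ) ^ (-N)) * volume (closedBall (0 : Rn n) 1)
          ≤ ENNReal.ofReal (r ^ n * (r + ‖c‖) ^ (-N)) * volume (closedBall (0 : Rn n) 1) :=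
            mul_le_mul_left (ENNReal.ofReal_le_ofReal hreal) _
        _ = ENNReal.ofReal (r ^ n) * volume (closedBall (0 : Rn n) 1)
              * ENNReal.ofReal ((r + ‖c‖) ^ (-N)) := by
            rw [ENNReal.ofReal_mul (by positivity)]
            ring
    set D : ℝ≥0∞ := ENNReal.ofReal ((3 : ℝ) ^ (-N)) * volume (closedBall (0 : Rn n) 1) with hD
    have hD0 : D ≠ 0 := by
      refine mul_ne_zero ?_ ?_
      · simp only [ne_eq, ENNReal.ofReal_eq_zero, not_le]; positivity
      · exact (measure_closedBall_pos volume (0 : Rn n) one_pos).ne'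
    have hDt : D ≠ ∞ := by
      exact ENNReal.mul_ne_top ENNReal.ofReal_ne_top
        (measure_closedBall_lt_top (x := (0 : Rn n)) (r := 1)).ne
    calc ∫⁻ x in closedBall c r, ENNReal.ofReal (1 + ‖x‖) ^ (-(N * q))
        ≤ ∫⁻ x : Rn n, ENNReal.ofReal (1 + ‖x‖) ^ (-(N * q)) := hsub
      _ = (∫⁻ x : Rn n, ENNReal.ofReal (1 + ‖x‖) ^ (-(N * q))) / D * D :=
          (ENNReal.div_mul_cancel hD0 hDt).symm
      _ ≤ (∫⁻ x : Rn n, ENNReal.ofReal (1 + ‖x‖) ^ (-(N * q))) / D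
            * (volume (closedBall c r) * ENNReal.ofReal (r + ‖c‖) ^ (-N)) :=
          mul_le_mul_right hlow _
      _ ≤ Kc n q * (volume (closedBall c r) * ENNReal.ofReal (r + ‖c‖) ^ (-N)) := by
          refine mul_le_mul_left ?_ _
          exact le_add_self
  · -- far case: pointwise bound
    push_neg at hc
    have hpt : ∀ x ∈ closedBall c r,
        ENNReal.ofReal (1 + ‖x‖) ^ (-(N * q))
          ≤ ENNReal.ofReal ((3 : ℝ) ^ (N * q) * (r + ‖c‖) ^ (-N)) := by
      intro x hx
      have h1 : ‖x - c‖ ≤ r := mem_closedBall_iff_norm.mp hx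
      have h2 : ‖c‖ - r ≤ ‖x‖ := by
        have := norm_sub_norm_le c x
        have h3 : ‖c - x‖ = ‖x - c‖ := norm_sub_rev c x
        linarith [abs_norm_sub_norm_le c x, norm_sub_rev c x, h1,
          (abs_le.mp (abs_norm_sub_norm_le c x)).1]
      have hlb : (1 + (r + ‖c‖)) / 3 ≤ 1 + ‖x‖ := by linarith
      have hNq0 : 0 ≤ N * q := by positivity
      have step1 : ENNReal.ofReal (1 + ‖x‖) ^ (-(N * q))
          ≤ ENNReal.ofReal ((1 + (r + ‖c‖)) / 3) ^ (-(N * q)) := by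
        rw [ENNReal.rpow_neg, ENNReal.rpow_neg]
        exact ENNReal.inv_le_inv.mpr
          (ENNReal.rpow_le_rpow (ENNReal.ofReal_le_ofReal hlb) hNq0)
      have hb3 : (0 : ℝ) < (1 + (r + ‖c‖)) / 3 := by positivity
      have step2 : ENNReal.ofReal ((1 + (r + ‖c‖)) / 3) ^ (-(N * q))
          = ENNReal.ofReal (((1 + (r + ‖c‖)) / 3) ^ (-(N * q))) :=
        ENNReal.ofReal_rpow_of_pos hb3
      have hrealpt : ((1 + (r + ‖c‖)) / 3) ^ (-(N * q))
          ≤ (3 : ℝ) ^ (N * q) * (r + ‖c‖) ^ (-N) := by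
        have e1 : ((1 + (r + ‖c‖)) / 3) ^ (-(N * q))
            = (3 : ℝ) ^ (N * q) * (1 + (r + ‖c‖)) ^ (-(N * q)) := by
          rw [Real.div_rpow (by positivity) (by norm_num),
            Real.rpow_neg (by norm_num : (0:ℝ) ≤ 3), div_eq_mul_inv, inv_inv, mul_comm]
        have e2 : (1 + (r + ‖c‖)) ^ (-(N * q)) ≤ (1 + (r + ‖c‖)) ^ (-N) := by
          apply Real.rpow_le_rpow_of_exponent_le (by linarith)
          nlinarith
        have e3 : (1 + (r + ‖c‖)) ^ (-N) ≤ (r + ‖c‖) ^ (-N) :=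
          Real.rpow_le_rpow_of_nonpos hR (by linarith) (by linarith)
        rw [e1]
        have h3pos : (0:ℝ) < (3 : ℝ) ^ (N * q) := by positivity
        nlinarith
      calc ENNReal.ofReal (1 + ‖x‖) ^ (-(N * q))
          ≤ ENNReal.ofReal ((1 + (r + ‖c‖)) / 3) ^ (-(N * q)) := step1
        _ = ENNReal.ofReal (((1 + (r + ‖c‖)) / 3) ^ (-(N * q))) := step2
        _ ≤ ENNReal.ofReal ((3 : ℝ) ^ (N * q) * (r + ‖c‖) ^ (-N)) :=
            ENNReal.ofReal_le_ofReal hrealpt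
    calc ∫⁻ x in closedBall c r, ENNReal.ofReal (1 + ‖x‖) ^ (-(N * q))
        ≤ ∫⁻ _x in closedBall c r, ENNReal.ofReal ((3 : ℝ) ^ (N * q) * (r + ‖c‖) ^ (-N)) :=
          setLIntegral_mono' measurableSet_closedBall hpt
      _ = ENNReal.ofReal ((3 : ℝ) ^ (N * q) * (r + ‖c‖) ^ (-N)) * volume (closedBall c r) :=
          setLIntegral_const _ _
      _ = ENNReal.ofReal ((3 : ℝ) ^ (N * q)) * (volume (closedBall c r)
            * ENNReal.ofReal (r + ‖c‖) ^ (-N)) := by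
          rw [ENNReal.ofReal_mul (by positivity), hXeq]
          ring
      _ ≤ Kc n q * (volume (closedBall c r) * ENNReal.ofReal (r + ‖c‖) ^ (-N)) := by
          refine mul_le_mul_left ?_ _
          exact self_le_add_right _ _

end Stmt15Aux

namespace Stmt15Aux

lemma collect_rpow (Y : ℝ≥0∞) (h0 : Y ≠ 0) (ht : Y ≠ ∞) (a b c : ℝ) (habc : a + b + c = 0) :
    Y ^ a * Y ^ b * Y ^ c = 1 := by
  rw [← ENNReal.rpow_add _ _ h0 ht, ← ENNReal.rpow_add _ _ h0 ht, habc, ENNReal.rpow_zero]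

lemma keyvar {n : ℕ} (hn : 1 ≤ n) {p q : ℝ} (hp : 1 < p) (hpq : p < q)
    (c : Rn n) {r : ℝ} (hr : 0 < r) :
    volume (closedBall c r) ^ (1 / p - 1 / q - 1)
      * (∫⁻ x in closedBall c r, ENNReal.ofReal (1 + ‖x‖) ^ (-((n : ℝ) * q))) ^ (1 / q)
      * (∫⁻ x in closedBall c r, ENNReal.ofReal ‖x‖ ^ ((n : ℝ) / q * (p / (p - 1)))) ^ ((p - 1) / p)
      ≤ Kc n q ^ (1 / q) := by
  have hq1 : (1 : ℝ) < q := hp.trans hpq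
  have hq0 : (0 : ℝ) < q := by linarith
  have hp0 : (0 : ℝ) < p := by linarith
  have hp1 : (0 : ℝ) < p - 1 := by linarith
  have hinvq : (0 : ℝ) ≤ 1 / q := by positivity
  have hpexp : (0 : ℝ) ≤ (p - 1) / p := by positivity
  have ha : (0 : ℝ) ≤ (n : ℝ) / q * (p / (p - 1)) := by positivity
  set V : ℝ≥0∞ := volume (closedBall c r) with hV
  have hV0 : V ≠ 0 := (measure_closedBall_pos volume c hr).ne'
  have hVt : V ≠ ∞ := measure_closedBall_lt_top.ne
  set X : ℝ≥0∞ := ENNReal.ofReal (r + ‖c‖) with hX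
  have hX0 : X ≠ 0 := by
    simp only [hX, ne_eq, ENNReal.ofReal_eq_zero, not_le]
    positivity
  have hXt : X ≠ ∞ := ENNReal.ofReal_ne_top
  have h1 := omega_int_le hn hq1 c hr
  have h2 := sigma_int_le ((n : ℝ) / q * (p / (p - 1))) ha c r
  have hKc : Kc n q ^ (1 / q) * (V ^ (1 / p - 1 / q - 1) * V ^ (1 / q) * V ^ ((p - 1) / p))
      * (X ^ (-(n : ℝ) * (1 / q)) * X ^ ((n : ℝ) / q * (p / (p - 1)) * ((p - 1) / p)))
      = Kc n q ^ (1 / q) := by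
    rw [collect_rpow V hV0 hVt _ _ _ (by field_simp; ring),
      ← ENNReal.rpow_add _ _ hX0 hXt]
    have hexp : -(n : ℝ) * (1 / q) + (n : ℝ) / q * (p / (p - 1)) * ((p - 1) / p) = 0 := by
      field_simp
      ring
    rw [hexp, ENNReal.rpow_zero, mul_one, mul_one]
  calc volume (closedBall c r) ^ (1 / p - 1 / q - 1)
        * (∫⁻ x in closedBall c r, ENNReal.ofReal (1 + ‖x‖) ^ (-((n : ℝ) * q))) ^ (1 / q)
        * (∫⁻ x in closedBall c r, ENNReal.ofReal ‖x‖ ^ ((n : ℝ) / q * (p / (p - 1)))) ^ ((p - 1) / p)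
      ≤ V ^ (1 / p - 1 / q - 1) * (Kc n q * (V * X ^ (-(n : ℝ)))) ^ (1 / q)
          * (X ^ ((n : ℝ) / q * (p / (p - 1))) * V) ^ ((p - 1) / p) := by
        exact mul_le_mul' (mul_le_mul' le_rfl (ENNReal.rpow_le_rpow h1 hinvq))
          (ENNReal.rpow_le_rpow h2 hpexp)
    _ = Kc n q ^ (1 / q) * (V ^ (1 / p - 1 / q - 1) * V ^ (1 / q) * V ^ ((p - 1) / p))
          * (X ^ (-(n : ℝ) * (1 / q)) * X ^ ((n : ℝ) / q * (p / (p - 1)) * ((p - 1) / p))) := by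
        rw [ENNReal.mul_rpow_of_nonneg _ _ hinvq, ENNReal.mul_rpow_of_nonneg _ _ hinvq,
          ENNReal.mul_rpow_of_nonneg _ _ hpexp, ← ENNReal.rpow_mul X (-(n : ℝ)) (1 / q),
          ← ENNReal.rpow_mul X ((n : ℝ) / q * (p / (p - 1))) ((p - 1) / p)]
        ring
    _ = Kc n q ^ (1 / q) := hKc

lemma rect_split {n m : ℕ} (f : Rn n → ℝ≥0∞) (g : Rn m → ℝ≥0∞)
    (hf : Measurable f) (hg : Measurable g) (S : Set (Rn n)) (T : Set (Rn m)) :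
    ∫⁻ w in S ×ˢ T, f w.1 * g w.2 = (∫⁻ x in S, f x) * (∫⁻ y in T, g y) := by
  rw [Measure.volume_eq_prod, ← Measure.prod_restrict]
  exact lintegral_prod_mul hf.aemeasurable hg.aemeasurable

end Stmt15Aux

namespace Stmt15Aux

lemma meas_omega {n : ℕ} (b : ℝ) :
    Measurable (fun x : Rn n => ENNReal.ofReal (1 + ‖x‖) ^ b) :=
  ENNReal.continuous_rpow_const.measurable.comp
    (ENNReal.measurable_ofReal.comp (measurable_const.add measurable_norm))

lemma meas_sigma {n : ℕ} (b : ℝ) :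
    Measurable (fun x : Rn n => ENNReal.ofReal ‖x‖ ^ b) :=
  ENNReal.continuous_rpow_const.measurable.comp
    (ENNReal.measurable_ofReal.comp measurable_norm)

end Stmt15Aux

theorem stmt15 (n m : ℕ) (hn : 1 ≤ n) (hm : 1 ≤ m) (α β p q : ℝ)
    (hα0 : 0 < α) (hαn : α < n) (hβ0 : 0 < β) (hβm : β < m)
    (hp : 1 < p) (hpq : p < q)
    (hrel1 : α / n = 1/p - 1/q) (hrel2 : β / m = 1/p - 1/q) :
    Achar α β p q
      (fun z : Rn n × Rn m =>
        ENNReal.ofReal (1 + ‖z.1‖) ^ (-(n : ℝ)) * ENNReal.ofReal (1 + ‖z.2‖) ^ (-(m : ℝ)))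
      (fun z : Rn n × Rn m =>
        ENNReal.ofReal ‖z.1‖ ^ (-((n : ℝ)/q)) * ENNReal.ofReal ‖z.2‖ ^ (-((m : ℝ)/q)))
      ≠ ∞ := by
  have hq1 : (1 : ℝ) < q := hp.trans hpq
  have hq0 : (0 : ℝ) < q := by linarith
  have hp0 : (0 : ℝ) < p := by linarith
  have hp1 : (0 : ℝ) < p - 1 := by linarith
  have hn' : (1 : ℝ) ≤ (n : ℝ) := by exact_mod_cast hn
  have hm' : (1 : ℝ) ≤ (m : ℝ) := by exact_mod_cast hm
  have hinvq : (0 : ℝ) ≤ 1 / q := by positivity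
  have hpexp : (0 : ℝ) ≤ (p - 1) / p := by positivity
  have hppexp : (0 : ℝ) ≤ p / (p - 1) := by positivity
  have hbound : Achar α β p q
      (fun z : Rn n × Rn m =>
        ENNReal.ofReal (1 + ‖z.1‖) ^ (-(n : ℝ)) * ENNReal.ofReal (1 + ‖z.2‖) ^ (-(m : ℝ)))
      (fun z : Rn n × Rn m =>
        ENNReal.ofReal ‖z.1‖ ^ (-((n : ℝ)/q)) * ENNReal.ofReal ‖z.2‖ ^ (-((m : ℝ)/q)))
      ≤ Stmt15Aux.Kc n q ^ (1 / q) * Stmt15Aux.Kc m q ^ (1 / q) := by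
    unfold Achar
    refine iSup_le fun c => iSup_le fun d => iSup_le fun r => iSup_le fun s =>
      iSup_le fun hr => iSup_le fun hs => ?_
    simp only []
    have eqω : ∫⁻ w in closedBall c r ×ˢ closedBall d s,
        (ENNReal.ofReal (1 + ‖w.1‖) ^ (-(n : ℝ)) * ENNReal.ofReal (1 + ‖w.2‖) ^ (-(m : ℝ))) ^ q
        = (∫⁻ x in closedBall c r, ENNReal.ofReal (1 + ‖x‖) ^ (-((n : ℝ) * q)))
          * (∫⁻ y in closedBall d s, ENNReal.ofReal (1 + ‖y‖) ^ (-((m : ℝ) * q))) := by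
      have hpt : ∀ w : Rn n × Rn m,
          (ENNReal.ofReal (1 + ‖w.1‖) ^ (-(n : ℝ)) * ENNReal.ofReal (1 + ‖w.2‖) ^ (-(m : ℝ))) ^ q
          = ENNReal.ofReal (1 + ‖w.1‖) ^ (-((n : ℝ) * q))
            * ENNReal.ofReal (1 + ‖w.2‖) ^ (-((m : ℝ) * q)) := by
        intro w
        rw [ENNReal.mul_rpow_of_nonneg _ _ hq0.le, ← ENNReal.rpow_mul, ← ENNReal.rpow_mul,
          neg_mul, neg_mul]
      simp only [hpt]
      exact Stmt15Aux.rect_split _ _ (Stmt15Aux.meas_omega _) (Stmt15Aux.meas_omega _) _ _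
    have eqσ : ∫⁻ w in closedBall c r ×ˢ closedBall d s,
        ((ENNReal.ofReal ‖w.1‖ ^ (-((n : ℝ)/q)) * ENNReal.ofReal ‖w.2‖ ^ (-((m : ℝ)/q)))⁻¹)
          ^ (p / (p - 1))
        = (∫⁻ x in closedBall c r, ENNReal.ofReal ‖x‖ ^ ((n : ℝ) / q * (p / (p - 1))))
          * (∫⁻ y in closedBall d s, ENNReal.ofReal ‖y‖ ^ ((m : ℝ) / q * (p / (p - 1)))) := by
      have hpt : ∀ w : Rn n × Rn m,
          ((ENNReal.ofReal ‖w.1‖ ^ (-((n : ℝ)/q)) * ENNReal.ofReal ‖w.2‖ ^ (-((m : ℝ)/q)))⁻¹)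
            ^ (p / (p - 1))
          = ENNReal.ofReal ‖w.1‖ ^ ((n : ℝ) / q * (p / (p - 1)))
            * ENNReal.ofReal ‖w.2‖ ^ ((m : ℝ) / q * (p / (p - 1))) := by
        intro w
        have ha : ENNReal.ofReal ‖w.1‖ ^ (-((n : ℝ)/q)) ≠ 0 := by
          intro h
          rcases ENNReal.rpow_eq_zero_iff.mp h with ⟨_, h2⟩ | ⟨h1, _⟩
          · have hpos : (0 : ℝ) < (n : ℝ) / q := by positivity
            linarith
          · exact ENNReal.ofReal_ne_top h1
        have hb : ENNReal.ofReal ‖w.2‖ ^ (-((m : ℝ)/q)) ≠ 0 := by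
          intro h
          rcases ENNReal.rpow_eq_zero_iff.mp h with ⟨_, h2⟩ | ⟨h1, _⟩
          · have hpos : (0 : ℝ) < (m : ℝ) / q := by positivity
            linarith
          · exact ENNReal.ofReal_ne_top h1
        rw [ENNReal.mul_inv (Or.inl ha) (Or.inr hb)]
        simp only [← ENNReal.rpow_neg, neg_neg]
        rw [ENNReal.mul_rpow_of_nonneg _ _ hppexp, ← ENNReal.rpow_mul, ← ENNReal.rpow_mul]
      simp only [hpt]
      exact Stmt15Aux.rect_split _ _ (Stmt15Aux.meas_sigma _) (Stmt15Aux.meas_sigma _) _ _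
    rw [hrel1, hrel2, eqω, eqσ, ENNReal.mul_rpow_of_nonneg _ _ hinvq,
      ENNReal.mul_rpow_of_nonneg _ _ hpexp]
    calc volume (closedBall c r) ^ (1 / p - 1 / q - 1) * volume (closedBall d s) ^ (1 / p - 1 / q - 1)
          * ((∫⁻ x in closedBall c r, ENNReal.ofReal (1 + ‖x‖) ^ (-((n : ℝ) * q))) ^ (1 / q)
            * (∫⁻ y in closedBall d s, ENNReal.ofReal (1 + ‖y‖) ^ (-((m : ℝ) * q))) ^ (1 / q))
          * ((∫⁻ x in closedBall c r, ENNReal.ofReal ‖x‖ ^ ((n : ℝ) / q * (p / (p - 1)))) ^ ((p - 1) / p)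
            * (∫⁻ y in closedBall d s, ENNReal.ofReal ‖y‖ ^ ((m : ℝ) / q * (p / (p - 1)))) ^ ((p - 1) / p))
        = (volume (closedBall c r) ^ (1 / p - 1 / q - 1)
            * (∫⁻ x in closedBall c r, ENNReal.ofReal (1 + ‖x‖) ^ (-((n : ℝ) * q))) ^ (1 / q)
            * (∫⁻ x in closedBall c r, ENNReal.ofReal ‖x‖ ^ ((n : ℝ) / q * (p / (p - 1)))) ^ ((p - 1) / p))
          * (volume (closedBall d s) ^ (1 / p - 1 / q - 1)
            * (∫⁻ y in closedBall d s, ENNReal.ofReal (1 + ‖y‖) ^ (-((m : ℝ) * q))) ^ (1 / q)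
            * (∫⁻ y in closedBall d s, ENNReal.ofReal ‖y‖ ^ ((m : ℝ) / q * (p / (p - 1)))) ^ ((p - 1) / p)) := by
          ring
      _ ≤ Stmt15Aux.Kc n q ^ (1 / q) * Stmt15Aux.Kc m q ^ (1 / q) :=
          mul_le_mul' (Stmt15Aux.keyvar hn hp hpq c hr) (Stmt15Aux.keyvar hm hp hpq d hs)
  refine ne_top_of_le_ne_top ?_ hbound
  exact ENNReal.mul_ne_top
    (ENNReal.rpow_ne_top_of_nonneg hinvq (Stmt15Aux.Kc_ne_top hn hq1))
    (ENNReal.rpow_ne_top_of_nonneg hinvq (Stmt15Aux.Kc_ne_top hm hq1))
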